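/- (Geodesic weak-quasi-convexity) Let C be a real n×n matrix with singular value decomposition C = UΣVᵀ (U, V orthogonal, Σ diagonal with nonnegative entries) and X_* := VUᵀ. Let X ∈ O(n) and let Ω be a skew-symmetric matrix with ‖Ω‖₂ < π and X·exp(Ω) = X_*. Then Tr(Ωᵀ · skew(Xᵀ Cᵀ)) ≥ (1/2)·(1 + cos(‖Ω‖₂))·(Tr(C X_*) − Tr(C X)). -/

import Mathlib

open Matrix

noncomputable section

/-- Matrix exponential of a real square matrix. -/
def mexp {n : ℕ} (A : Matrix (Fin n) (Fin n) ℝ) : Matrix (Fin n) (Fin n) ℝ :=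
  NormedSpace.exp A

/-- Skew-symmetric part: `skew M = (M - Mᵀ)/2`. -/
def skewPart {n : ℕ} (M : Matrix (Fin n) (Fin n) ℝ) : Matrix (Fin n) (Fin n) ℝ :=
  (1 / 2 : ℝ) • (M - Mᵀ)

/-- Frobenius norm of a real square matrix. -/
def frobNorm {n : ℕ} (A : Matrix (Fin n) (Fin n) ℝ) : ℝ :=
  Real.sqrt (∑ i, ∑ j, (A i j) ^ 2)

/-- The singular values of `A`: square roots of the eigenvalues of `AᴴA = AᵀA`. -/
def singVals {n : ℕ} (A : Matrix (Fin n) (Fin n) ℝ) : Fin n → ℝ :=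
  fun i => Real.sqrt ((show (Aᵀ * A).IsHermitian from Matrix.isHermitian_conjTranspose_mul_self A).eigenvalues i)

/-- Largest singular value of `A`. -/
def sigmaMax {n : ℕ} (A : Matrix (Fin n) (Fin n) ℝ) : ℝ := ⨆ i, singVals A i

/-- Smallest singular value of `A`. -/
def sigmaMin {n : ℕ} (A : Matrix (Fin n) (Fin n) ℝ) : ℝ := ⨅ i, singVals A i

/-- Spectral norm (largest singular value) of `A`. -/
def specNorm {n : ℕ} (A : Matrix (Fin n) (Fin n) ℝ) : ℝ := sigmaMax A

/-- Riemannian distance on a connected component of `O(n)`: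
`dist(X,Y) = min { ‖Ω‖_F : Ω skew-symmetric, X·exp(Ω) = Y }`. -/
def Odist {n : ℕ} (X Y : Matrix (Fin n) (Fin n) ℝ) : ℝ :=
  sInf {d : ℝ | ∃ Ω : Matrix (Fin n) (Fin n) ℝ, Ωᵀ = -Ω ∧ X * mexp Ω = Y ∧ d = frobNorm Ω}

end

/-!
Writing `C = U S Vᵀ`, one has `C X_* = A := U S Uᵀ ⪰ 0` and `C X = A exp(-Ω)`, and the left-hand
side equals `tr (A exp(-Ω) Ω)`. So it suffices that `tr (A M) ≥ 0` for
`M = exp(-Ω) Ω + c (exp(-Ω) - 1)` with `c = (1 + cos ‖Ω‖₂) / 2`.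
Over `ℂ` the matrix `iΩ` is Hermitian; its eigenvalues `r` satisfy `|r| ≤ ‖Ω‖₂ < π`, since the
`r²` are eigenvalues of `(iΩ)² = ΩᵀΩ`. In an orthonormal eigenbasis of `iΩ` the matrix `M` is
diagonal with entries `e^{ir} (c - ir) - c`, whose real parts `r sin r - c (1 - cos r)` are
nonnegative by elementary trigonometry, and pairing a diagonal matrix with nonnegative real parts
against a positive semidefinite matrix gives a trace with nonnegative real part.
-/

open scoped ComplexOrder

section Complexify

variable {ι : Type*} [Fintype ι] [DecidableEq ι]

abbrev complexify : Matrix ι ι ℝ →ₐ[ℝ] Matrix ι ι ℂ := Complex.ofRealAm.mapMatrix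

open scoped Norms.Operator in
lemma complexify_exp (A : Matrix ι ι ℝ) :
    complexify (NormedSpace.exp A) = NormedSpace.exp (complexify A) :=
  NormedSpace.map_exp _ (continuous_id.matrix_map Complex.continuous_ofReal) A

lemma conjTranspose_complexify (A : Matrix ι ι ℝ) : (complexify A)ᴴ = complexify Aᴴ := by
  ext i j
  simp [conjTranspose_apply]

lemma trace_complexify (A : Matrix ι ι ℝ) : (complexify A).trace = A.trace := by
  simp [Matrix.trace, Complex.ofReal_sum]

lemma Matrix.PosSemidef.complexify {A : Matrix ι ι ℝ} (hA : A.PosSemidef) :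
    (_root_.complexify A).PosSemidef := by
  set Q : Matrix ι ι ℝ := (hA.1.eigenvectorUnitary : Matrix ι ι ℝ)
  have hQ : A = Q * diagonal hA.1.eigenvalues * Qᴴ := by
    have h := hA.1.spectral_theorem
    rwa [Unitary.conjStarAlgAut_apply, RCLike.ofReal_real_eq_id, Function.id_comp] at h
  have hD : (_root_.complexify (diagonal hA.1.eigenvalues)).PosSemidef := by
    rw [AlgHom.mapMatrix_apply, diagonal_map (map_zero _)]
    exact PosSemidef.diagonal fun i => by simpa using hA.eigenvalues_nonneg i
  rw [hQ, map_mul, map_mul, ← conjTranspose_complexify]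
  exact hD.mul_mul_conjTranspose_same _

end Complexify

section UnitaryConj

variable {ι 𝕜 : Type*} [Fintype ι] [DecidableEq ι] [RCLike 𝕜]

lemma Unitary.conjStarAlgAut_exp (u : unitary (Matrix ι ι 𝕜)) (A : Matrix ι ι 𝕜) :
    conjStarAlgAut 𝕜 _ u (NormedSpace.exp A) = NormedSpace.exp (conjStarAlgAut 𝕜 _ u A) := by
  simpa [conjStarAlgAut_apply] using (Matrix.exp_units_conj (toUnits u) A).symm

lemma Matrix.PosSemidef.conjStarAlgAut {A : Matrix ι ι 𝕜} (hA : A.PosSemidef)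
    (u : unitary (Matrix ι ι 𝕜)) : (Unitary.conjStarAlgAut 𝕜 _ u A).PosSemidef := by
  rw [Unitary.conjStarAlgAut_apply, star_eq_conjTranspose]
  exact hA.mul_mul_conjTranspose_same _

lemma Matrix.PosSemidef.re_trace_mul_diagonal_nonneg {B : Matrix ι ι 𝕜} (hB : B.PosSemidef)
    {g : ι → 𝕜} (hg : ∀ k, 0 ≤ RCLike.re (g k)) :
    0 ≤ RCLike.re (B * diagonal g).trace := by
  simp only [trace, diag, mul_diagonal, map_sum]
  refine Finset.sum_nonneg fun k _ => ?_
  obtain ⟨hre, him⟩ := RCLike.nonneg_iff.mp (hB.diag_nonneg (i := k))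
  rw [RCLike.mul_re, him, zero_mul, sub_zero]
  exact mul_nonneg hre (hg k)

end UnitaryConj

section Skew

variable {ι : Type*} [Fintype ι] [DecidableEq ι] {Ω : Matrix ι ι ℝ} (hΩ : Ωᵀ = -Ω)
include hΩ

lemma isHermitian_I_smul_complexify : (Complex.I • complexify Ω).IsHermitian := by
  rw [IsHermitian, conjTranspose_smul, conjTranspose_complexify,
    conjTranspose_eq_transpose_of_trivial, hΩ, map_neg]
  simp

noncomputable def rotationAngles : ι → ℝ := (isHermitian_I_smul_complexify hΩ).eigenvalues

noncomputable abbrev rotationFrameConj : Matrix ι ι ℂ ≃⋆ₐ[ℂ] Matrix ι ι ℂ :=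
  Unitary.conjStarAlgAut ℂ _ (star (isHermitian_I_smul_complexify hΩ).eigenvectorUnitary)

lemma rotationFrameConj_I_smul_complexify :
    rotationFrameConj hΩ (Complex.I • complexify Ω) =
      diagonal fun k => (rotationAngles hΩ k : ℂ) :=
  (isHermitian_I_smul_complexify hΩ).conjStarAlgAut_star_eigenvectorUnitary

lemma rotationFrameConj_complexify :
    rotationFrameConj hΩ (complexify Ω) =
      diagonal fun k => -(Complex.I * rotationAngles hΩ k) := by
  have h : complexify Ω = (-Complex.I) • (Complex.I • complexify Ω) := by
    rw [smul_smul]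
    simp
  rw [h, map_smul, rotationFrameConj_I_smul_complexify, ← diagonal_smul]
  ext i j
  simp [diagonal_apply]

lemma rotationFrameConj_complexify_exp_neg :
    rotationFrameConj hΩ (complexify (NormedSpace.exp (-Ω))) =
      diagonal fun k => Complex.exp (Complex.I * rotationAngles hΩ k) := by
  have h : complexify (-Ω) = Complex.I • (Complex.I • complexify Ω) := by
    rw [map_neg, smul_smul]
    simp
  rw [complexify_exp, Unitary.conjStarAlgAut_exp, h, map_smul,
    rotationFrameConj_I_smul_complexify hΩ, ← diagonal_smul, exp_diagonal]
  ext i j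
  simp [diagonal_apply, Complex.exp_eq_exp_ℂ]

end Skew

lemma abs_rotationAngles_le_specNorm {n : ℕ} {Ω : Matrix (Fin n) (Fin n) ℝ} (hΩ : Ωᵀ = -Ω)
    (k : Fin n) : |rotationAngles hΩ k| ≤ specNorm Ω := by
  have hG : (Ωᵀ * Ω).IsHermitian := isHermitian_conjTranspose_mul_self Ω
  have hsq : (Complex.I • complexify Ω) ^ 2 = complexify (Ωᵀ * Ω) := by
    rw [pow_two, smul_mul_smul_comm, Complex.I_mul_I, hΩ, map_mul, map_neg]
    simp
  have hmem : rotationAngles hΩ k ^ 2 ∈ spectrum ℝ (Ωᵀ * Ω) := by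
    apply AlgHom.spectrum_apply_subset (complexify : Matrix (Fin n) (Fin n) ℝ →ₐ[ℝ] _)
    rw [← hsq]
    exact spectrum.pow_mem_pow _ 2
      ((isHermitian_I_smul_complexify hΩ).eigenvalues_mem_spectrum_real k)
  obtain ⟨j, hj⟩ := hG.spectrum_real_eq_range_eigenvalues ▸ hmem
  calc |rotationAngles hΩ k| = singVals Ω j := by
        rw [singVals, ← Real.sqrt_sq_eq_abs]
        exact congrArg Real.sqrt hj.symm
    _ ≤ specNorm Ω := le_ciSup (Set.finite_range _).bddAbove j

lemma half_one_add_cos_mul_one_sub_cos_le_mul_sin {x θ : ℝ} (hx : |x| ≤ θ)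
    (hθ : θ < Real.pi) :
    1 / 2 * (1 + Real.cos θ) * (1 - Real.cos x) ≤ x * Real.sin x := by
  have heven : x * Real.sin x = |x| * Real.sin |x| := by
    rcases abs_cases x with ⟨h, _⟩ | ⟨h, _⟩ <;> simp [h, Real.sin_neg]
  rw [← Real.cos_abs x, heven]
  set y := |x|
  have hy : 0 ≤ y := abs_nonneg x
  have hcos : Real.cos θ ≤ Real.cos y := Real.cos_le_cos_of_nonneg_of_le_pi hy hθ.le hx
  have hsin : Real.sin y ≤ y := Real.sin_le hy
  have hsin0 : 0 ≤ Real.sin y := Real.sin_nonneg_of_nonneg_of_le_pi hy (by linarith)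
  nlinarith [Real.sin_sq_add_cos_sq y, Real.cos_le_one y, mul_nonneg hsin0 (sub_nonneg.2 hsin)]

lemma re_exp_I_mul_mul_sub_sub (r c : ℝ) :
    (Complex.exp (Complex.I * r) * (c - Complex.I * r) - c).re =
      r * Real.sin r - c * (1 - Real.cos r) := by
  rw [mul_comm Complex.I, Complex.exp_mul_I, ← Complex.ofReal_cos, ← Complex.ofReal_sin]
  simp only [Complex.sub_re, Complex.mul_re, Complex.mul_im, Complex.add_re, Complex.add_im,
    Complex.sub_im, Complex.I_re, Complex.I_im, Complex.ofReal_re, Complex.ofReal_im]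
  ring

theorem le_trace_mul_exp_neg_mul {n : ℕ} {A Ω : Matrix (Fin n) (Fin n) ℝ} (hA : A.PosSemidef)
    (hΩ : Ωᵀ = -Ω) (hπ : specNorm Ω < Real.pi) :
    1 / 2 * (1 + Real.cos (specNorm Ω)) * (A.trace - (A * mexp (-Ω)).trace) ≤
      (A * mexp (-Ω) * Ω).trace := by
  set c := 1 / 2 * (1 + Real.cos (specNorm Ω))
  set M := mexp (-Ω) * Ω + c • mexp (-Ω) - c • 1
  suffices h : 0 ≤ (A * M).trace by
    simp only [M, mul_add, mul_sub, trace_add, trace_sub, Matrix.mul_smul, trace_smul, mul_one,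
      smul_eq_mul, ← mul_assoc] at h
    linarith
  set r := rotationAngles hΩ
  have hM : rotationFrameConj hΩ (complexify M) =
      diagonal fun k => Complex.exp (Complex.I * r k) * (c - Complex.I * r k) - c := by
    simp only [M, mexp, map_sub, map_add, map_mul, map_smul, map_one,
      RCLike.real_smul_eq_coe_smul (K := ℂ), rotationFrameConj_complexify,
      rotationFrameConj_complexify_exp_neg]
    ext i j
    by_cases h : i = j
    · simp [h, r]
      ring
    · simp [h]
  have htrace : (A * M).trace =
      (rotationFrameConj hΩ (complexify A) * rotationFrameConj hΩ (complexify M)).trace.re := by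
    rw [← map_mul, ← map_mul, trace_map, trace_complexify, Complex.ofReal_re]
  rw [htrace, hM]
  refine (hA.complexify.conjStarAlgAut _).re_trace_mul_diagonal_nonneg fun k => ?_
  rw [RCLike.re_to_complex, re_exp_I_mul_mul_sub_sub, sub_nonneg]
  exact half_one_add_cos_mul_one_sub_cos_le_mul_sin (abs_rotationAngles_le_specNorm hΩ k) hπ

lemma trace_transpose_mul_skewPart_transpose {n : ℕ} {Ω : Matrix (Fin n) (Fin n) ℝ}
    (hΩ : Ωᵀ = -Ω) (N : Matrix (Fin n) (Fin n) ℝ) :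
    (Ωᵀ * skewPart Nᵀ).trace = (N * Ω).trace := by
  have h : (Ω * Nᵀ).trace = -(N * Ω).trace := by
    rw [← trace_transpose, transpose_mul, transpose_transpose, hΩ, mul_neg, trace_neg]
  rw [skewPart, transpose_transpose, hΩ, mul_smul_comm, trace_smul, neg_mul, trace_neg, mul_sub,
    trace_sub, h, trace_mul_comm Ω N, smul_eq_mul]
  ring

theorem procrustes_weak_quasi_convexity_general {n : ℕ}
    (C U S V : Matrix (Fin n) (Fin n) ℝ)
    (hV : Vᵀ * V = 1)
    (hSdiag : S.IsDiag) (hSnn : ∀ i, 0 ≤ S i i)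
    (hSVD : C = U * S * Vᵀ)
    (Xstar : Matrix (Fin n) (Fin n) ℝ) (hXstar : Xstar = V * Uᵀ)
    (X Ω : Matrix (Fin n) (Fin n) ℝ)
    (hskew : Ωᵀ = -Ω) (hΩ : specNorm Ω < Real.pi)
    (hlog : X * mexp Ω = Xstar) :
    (Ωᵀ * skewPart (Xᵀ * Cᵀ)).trace ≥
      (1 / 2) * (1 + Real.cos (specNorm Ω)) * ((C * Xstar).trace - (C * X).trace) := by
  have hA : (U * S * Uᵀ).PosSemidef := by
    rw [← hSdiag.diagonal_diag, ← conjTranspose_eq_transpose_of_trivial]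
    exact (PosSemidef.diagonal hSnn).mul_mul_conjTranspose_same U
  have hCXstar : C * Xstar = U * S * Uᵀ := by
    rw [hSVD, hXstar, mul_assoc, ← mul_assoc Vᵀ, hV, one_mul]
  have hX : X = Xstar * mexp (-Ω) := by
    rw [← hlog, mul_assoc, mexp, mexp,
      ← Matrix.exp_add_of_commute _ _ (Commute.refl Ω).neg_right, add_neg_cancel,
      NormedSpace.exp_zero, mul_one]
  have hCX : C * X = U * S * Uᵀ * mexp (-Ω) := by
    rw [hX, ← mul_assoc, hCXstar]
  rw [← transpose_mul, trace_transpose_mul_skewPart_transpose hskew, hCXstar, hCX, ge_iff_le]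
  exact le_trace_mul_exp_neg_mul hA hskew hΩ

/-- geodesic weak-quasi-convexity of the Procrustes objective. -/
theorem procrustes_weak_quasi_convexity {n : ℕ}
    (C U S V : Matrix (Fin n) (Fin n) ℝ)
    (hU : Uᵀ * U = 1) (hV : Vᵀ * V = 1)
    (hSdiag : S.IsDiag) (hSnn : ∀ i, 0 ≤ S i i)
    (hSVD : C = U * S * Vᵀ)
    (Xstar : Matrix (Fin n) (Fin n) ℝ) (hXstar : Xstar = V * Uᵀ)
    (X Ω : Matrix (Fin n) (Fin n) ℝ)
    (hX : Xᵀ * X = 1)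
    (hskew : Ωᵀ = -Ω) (hΩ : specNorm Ω < Real.pi)
    (hlog : X * mexp Ω = Xstar) :
    (Ωᵀ * skewPart (Xᵀ * Cᵀ)).trace ≥
      (1 / 2) * (1 + Real.cos (specNorm Ω)) * ((C * Xstar).trace - (C * X).trace) :=
  procrustes_weak_quasi_convexity_general C U S V hV hSdiag hSnn hSVD Xstar hXstar X Ω hskew hΩ hlog
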